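/- arXiv:1403.5364 — 5 statements merged into one kernel-verified Lean document; each statement's English description precedes it below -/
import Mathlib

section
/- Let W(x,t) > 0 and Y(x,u,t) satisfy −Ẇ + AW + WA' + BY + Y'B' < 0 for all x,u,t. Then M := W⁻¹ and K := YW⁻¹ satisfy the control contraction condition Ṁ + (A+BK)'M + M(A+BK) < 0. -/
/-!
Congruence by the invertible symmetric matrix `W⁻¹` preserves positive definiteness, and it maps
the dual condition `−Ẇ + AW + WAᵀ + BY + YᵀBᵀ` term by term onto the contraction condition for
`M = W⁻¹`, `K = YW⁻¹`: e.g. `W⁻¹ (BY) W⁻¹ = M B K` and `W⁻¹ (A W) W⁻¹ = M A`.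
-/

open Matrix

variable {ι κ R : Type*} [Fintype ι] [Fintype κ] [DecidableEq ι] [CommRing R]

def dualContractionForm (A : Matrix ι ι R) (B : Matrix ι κ R) (W Wd : Matrix ι ι R)
    (Y : Matrix κ ι R) : Matrix ι ι R :=
  -Wd + A * W + W * Aᵀ + B * Y + Yᵀ * Bᵀ

def contractionForm (A : Matrix ι ι R) (B : Matrix ι κ R) (M Md : Matrix ι ι R)
    (K : Matrix κ ι R) : Matrix ι ι R :=
  Md + (A + B * K)ᵀ * M + M * (A + B * K)

theorem inv_mul_dualContractionForm_mul_inv {A : Matrix ι ι R} {W : Matrix ι ι R}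
    (B : Matrix ι κ R) (Wd : Matrix ι ι R) (Y : Matrix κ ι R) (hW : IsUnit W.det)
    (hWsymm : W.IsSymm) :
    W⁻¹ * dualContractionForm A B W Wd Y * W⁻¹ =
      contractionForm A B W⁻¹ (-(W⁻¹ * Wd * W⁻¹)) (Y * W⁻¹) := by
  have hWinvT : W⁻¹ᵀ = W⁻¹ := by rw [transpose_nonsing_inv, hWsymm.eq]
  have hWWinv : W * W⁻¹ = 1 := mul_nonsing_inv W hW
  have hWinvW : W⁻¹ * W = 1 := nonsing_inv_mul W hW
  simp only [dualContractionForm, contractionForm, transpose_add, transpose_mul, hWinvT,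
    Matrix.mul_add, Matrix.add_mul, Matrix.mul_neg, Matrix.neg_mul, Matrix.mul_assoc, hWWinv,
    Matrix.mul_one]
  simp only [← Matrix.mul_assoc W⁻¹ W, hWinvW, Matrix.one_mul]
  abel

theorem ccm_W_to_M_general (n m : ℕ)
    (A : Matrix (Fin n) (Fin n) ℝ) (B : Matrix (Fin n) (Fin m) ℝ)
    (W Wd : Matrix (Fin n) (Fin n) ℝ) (Y : Matrix (Fin m) (Fin n) ℝ)
    (hW : W.PosDef)
    (h : (-(-Wd + A * W + W * Aᵀ + B * Y + Yᵀ * Bᵀ)).PosDef) :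
    (-((-(W⁻¹ * Wd * W⁻¹)) + (A + B * (Y * W⁻¹))ᵀ * W⁻¹ + W⁻¹ * (A + B * (Y * W⁻¹)))).PosDef := by
  have hWdet : IsUnit W.det := hW.isUnit.map detMonoidHom
  have hWinv : W⁻¹.PosDef := hW.inv
  have hconj := h.conjTranspose_mul_mul_same (mulVec_injective_of_isUnit hWinv.isUnit)
  rw [hWinv.isHermitian.eq, Matrix.mul_neg, Matrix.neg_mul] at hconj
  rwa [← dualContractionForm, inv_mul_dualContractionForm_mul_inv B Wd Y hWdet hW.isHermitian]
    at hconj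

/-- if `W > 0` and `Y` satisfy `−Ẇ + AW + WA' + BY + Y'B' < 0`, then
`M := W⁻¹`, `K := YW⁻¹` satisfy the control contraction condition
`Ṁ + (A+BK)'M + M(A+BK) < 0`, where `Ṁ = −W⁻¹ Ẇ W⁻¹`. -/
theorem ccm_W_to_M (n m : ℕ)
    (A : Matrix (Fin n) (Fin n) ℝ) (B : Matrix (Fin n) (Fin m) ℝ)
    (W Wd : Matrix (Fin n) (Fin n) ℝ) (Y : Matrix (Fin m) (Fin n) ℝ)
    (hW : W.PosDef) (hWd : Wd.IsSymm)
    (h : (-(-Wd + A * W + W * Aᵀ + B * Y + Yᵀ * Bᵀ)).PosDef) :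
    (-((-(W⁻¹ * Wd * W⁻¹)) + (A + B * (Y * W⁻¹))ᵀ * W⁻¹ + W⁻¹ * (A + B * (Y * W⁻¹)))).PosDef :=
  ccm_W_to_M_general n m A B W Wd Y hW h
end

section
/- (Finsler-type converse) Let S be a symmetric n×n matrix and B an n×m matrix such that δ'Sδ < 0 for all nonzero δ with B'δ = 0. Then there exists ρ ∈ ℝ such that S − ρBB' < 0 (negative definite). -/
/-!
Normalise to the unit sphere, which is compact. The sets `{δ | δ'Sδ < ρ |B'δ|²}` are open and
increase with `ρ`; they cover the sphere, because at a point with `B'δ = 0` already `ρ = 0`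
works by hypothesis, and elsewhere `|B'δ|² > 0` so a large `ρ` works. Compactness extracts a
single `ρ`, and homogeneity of both quadratic forms extends the strict inequality from the
sphere to all `δ ≠ 0`.
-/

open Matrix Metric

theorem IsCompact.exists_forall_lt_mul {X : Type*} [TopologicalSpace X] {K : Set X}
    (hK : IsCompact K) {f g : X → ℝ} (hf : Continuous f) (hg : Continuous g)
    (hg_nonneg : ∀ x, 0 ≤ g x) (hfg : ∀ x ∈ K, g x = 0 → f x < 0) :
    ∃ ρ : ℝ, ∀ x ∈ K, f x < ρ * g x := by
  have hcover : K ⊆ ⋃ ρ : ℝ, {x | f x < ρ * g x} := by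
    intro x hx
    rcases (hg_nonneg x).eq_or_lt with hgx | hgx
    · exact Set.mem_iUnion.2 ⟨0, by simpa using hfg x hx hgx.symm⟩
    · refine Set.mem_iUnion.2 ⟨f x / g x + 1, ?_⟩
      simp only [Set.mem_ofPred_eq, add_mul, div_mul_cancel₀ _ hgx.ne', one_mul]
      linarith
  refine hK.elim_directed_cover _ (fun ρ => isOpen_lt hf (continuous_const.mul hg)) hcover ?_
  exact Monotone.directed_le fun ρ σ hρσ x (hx : f x < ρ * g x) =>
    hx.trans_le (mul_le_mul_of_nonneg_right hρσ (hg_nonneg x))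

namespace Matrix

variable {ι : Type*} [Fintype ι]

theorem smul_dotProduct_mulVec_smul (M : Matrix ι ι ℝ) (c : ℝ) (x : ι → ℝ) :
    c • x ⬝ᵥ M *ᵥ (c • x) = c ^ 2 * (x ⬝ᵥ M *ᵥ x) := by
  simp only [mulVec_smul, smul_dotProduct, dotProduct_smul, smul_eq_mul]
  ring

theorem posDef_of_forall_mem_sphere {M : Matrix ι ι ℝ} (hM : M.IsHermitian)
    (h : ∀ x ∈ sphere (0 : ι → ℝ) 1, 0 < x ⬝ᵥ M *ᵥ x) : M.PosDef := by
  refine posDef_iff_dotProduct_mulVec.2 ⟨hM, fun x hx => ?_⟩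
  have hx' : ‖x‖ ≠ 0 := norm_ne_zero_iff.2 hx
  have hunit : ‖x‖⁻¹ • x ∈ sphere (0 : ι → ℝ) 1 := by
    simp [norm_smul, hx']
  have hpos := h _ hunit
  rw [smul_dotProduct_mulVec_smul] at hpos
  simpa using pos_of_mul_pos_right hpos (by positivity)

theorem dotProduct_mul_transpose_mulVec {κ : Type*} [Fintype κ] (B : Matrix ι κ ℝ)
    (x : ι → ℝ) : x ⬝ᵥ (B * Bᵀ) *ᵥ x = Bᵀ *ᵥ x ⬝ᵥ Bᵀ *ᵥ x := by
  rw [← mulVec_mulVec, dotProduct_mulVec, ← mulVec_transpose]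

end Matrix

/-- Finsler-type converse: if `S` is symmetric and `δ'Sδ < 0` for all nonzero `δ`
with `B'δ = 0`, then there exists `ρ ∈ ℝ` with `S − ρBB' < 0` (negative definite). -/
theorem finsler_converse (n m : ℕ)
    (S : Matrix (Fin n) (Fin n) ℝ) (B : Matrix (Fin n) (Fin m) ℝ)
    (hS : S.IsSymm)
    (h : ∀ δ : Fin n → ℝ, δ ≠ 0 → Bᵀ *ᵥ δ = 0 → δ ⬝ᵥ S *ᵥ δ < 0) :
    ∃ ρ : ℝ, (-(S - ρ • (B * Bᵀ))).PosDef := by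
  have hkernel : ∀ δ ∈ sphere (0 : Fin n → ℝ) 1, Bᵀ *ᵥ δ ⬝ᵥ Bᵀ *ᵥ δ = 0 → δ ⬝ᵥ S *ᵥ δ < 0 :=
    fun δ hδ hBδ => h δ (ne_zero_of_mem_unit_sphere ⟨δ, hδ⟩) (dotProduct_self_eq_zero.1 hBδ)
  obtain ⟨ρ, hρ⟩ := (isCompact_sphere (0 : Fin n → ℝ) 1).exists_forall_lt_mul
    (g := fun δ => Bᵀ *ᵥ δ ⬝ᵥ Bᵀ *ᵥ δ) (by fun_prop) (by fun_prop)
    (fun δ => dotProduct_self_star_nonneg (Bᵀ *ᵥ δ)) hkernel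
  have hBB : (B * Bᵀ).IsHermitian := by simpa using isHermitian_mul_conjTranspose_self B
  have hherm : (-(S - ρ • (B * Bᵀ))).IsHermitian :=
    ((isHermitian_iff_isSymm.2 hS).sub (hBB.smul (.all ρ))).neg
  refine ⟨ρ, posDef_of_forall_mem_sphere hherm fun δ hδ => ?_⟩
  simp only [neg_mulVec, sub_mulVec, smul_mulVec, dotProduct_neg, dotProduct_sub,
    dotProduct_smul, smul_eq_mul, dotProduct_mul_transpose_mulVec]
  linarith [hρ δ hδ]
end

section
/- If a linear system ż = Gz + Hv is stabilizable, i.e. there exist X = X' > 0 and L with XG + G'X + XHL + L'H'X < 0, and the nonlinear system is feedback linearizable via diffeomorphism z = θ(x,t) and feedback ū = α + βv (β invertible), then M(x) = Θ'XΘ with Θ = ∂θ/∂x is a control contraction metric: Ṁ + A'M + MA + MBK + K'B'M < 0 with K = ∂ū/∂x + βLΘ, where A, B are the differential dynamics matrices and G = ṪΘ⁻¹ + Θ(A + B∂ū/∂x)Θ⁻¹, H = ΘBβ (writing Ṫ = Θ̇). -/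
/-!
Write `Ṁ = Θ̇ᵀXΘ + ΘᵀXΘ̇` and `K = Ux + βLΘ`. Conjugating the closed-loop Lyapunov expression
`XG + GᵀX + XHL + LᵀHᵀX` of the linear system by `Θ` gives exactly
`Ṁ + AᵀM + MA + MBK + KᵀBᵀM`: the `Θ⁻¹` in `G` cancels against `Θ`, and `H L Θ = Θ B (β L Θ)`.
Congruence by the invertible `Θ` preserves positive definiteness, so negativity transfers.
-/

open Matrix

namespace Matrix

variable {R n m : Type*} [CommRing R] [Fintype n] [Fintype m]

/-- The derivative of `zᵀXz` along `ż = (G + HL)z`. -/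
def closedLoopLyapunov (X G : Matrix n n R) (H : Matrix n m R) (L : Matrix m n R) :
    Matrix n n R :=
  X * G + Gᵀ * X + X * H * L + Lᵀ * Hᵀ * X

theorem transpose_mul_closedLoopLyapunov_mul [DecidableEq n] {Θ : Matrix n n R}
    (hΘ : IsUnit Θ.det) (X Θd A : Matrix n n R) (B : Matrix n m R) (β : Matrix m m R)
    (Ux L : Matrix m n R) :
    Θᵀ * closedLoopLyapunov X (Θd * Θ⁻¹ + Θ * (A + B * Ux) * Θ⁻¹) (Θ * B * β) L * Θ
      = (Θdᵀ * X * Θ + Θᵀ * X * Θd) + Aᵀ * (Θᵀ * X * Θ) + (Θᵀ * X * Θ) * A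
        + (Θᵀ * X * Θ) * B * (Ux + β * L * Θ)
        + (Ux + β * L * Θ)ᵀ * Bᵀ * (Θᵀ * X * Θ) := by
  have hΘt : IsUnit Θᵀ.det := (isUnit_det_transpose Θ) hΘ
  simp only [closedLoopLyapunov, transpose_mul, transpose_add, transpose_nonsing_inv,
    Matrix.mul_add, Matrix.add_mul, Matrix.mul_assoc, nonsing_inv_mul_cancel_right _ _ hΘ,
    mul_nonsing_inv_cancel_left _ _ hΘt]
  abel

end Matrix

theorem feedback_linearizable_ccm_general (n m : ℕ)
    (A : Matrix (Fin n) (Fin n) ℝ) (B : Matrix (Fin n) (Fin m) ℝ)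
    (Θ Θd : Matrix (Fin n) (Fin n) ℝ) (hΘ : IsUnit Θ.det)
    (β : Matrix (Fin m) (Fin m) ℝ)
    (Ux : Matrix (Fin m) (Fin n) ℝ)
    (X : Matrix (Fin n) (Fin n) ℝ)
    (L : Matrix (Fin m) (Fin n) ℝ)
    (G : Matrix (Fin n) (Fin n) ℝ) (H : Matrix (Fin n) (Fin m) ℝ)
    (hG : G = Θd * Θ⁻¹ + Θ * (A + B * Ux) * Θ⁻¹)
    (hH : H = Θ * B * β)
    (hLyap : (-(X * G + Gᵀ * X + X * H * L + Lᵀ * Hᵀ * X)).PosDef) :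
    (-((Θdᵀ * X * Θ + Θᵀ * X * Θd) + Aᵀ * (Θᵀ * X * Θ) + (Θᵀ * X * Θ) * A
        + (Θᵀ * X * Θ) * B * (Ux + β * L * Θ)
        + (Ux + β * L * Θ)ᵀ * Bᵀ * (Θᵀ * X * Θ))).PosDef := by
  subst hG hH
  rw [← transpose_mul_closedLoopLyapunov_mul hΘ, ← Matrix.neg_mul, ← Matrix.mul_neg,
    ← conjTranspose_eq_transpose_of_trivial, ← star_eq_conjTranspose]
  exact ((isUnit_iff_isUnit_det Θ).2 hΘ).posDef_star_left_conjugate_iff.2 hLyap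

/-- for a feedback-linearizable system, `M = Θ'XΘ` is a control contraction
metric. Pointwise in `(x,u,t)`: if `X = X' > 0` and `L` satisfy
`XG + G'X + XHL + L'H'X < 0` where `G = Θ̇Θ⁻¹ + Θ(A + B Ux)Θ⁻¹` and `H = ΘBβ`, then with
`M = Θ'XΘ`, `Ṁ = Θ̇'XΘ + Θ'XΘ̇` and `K = Ux + βLΘ` (where `Ux = ∂ū/∂x`):
`Ṁ + A'M + MA + MBK + K'B'M < 0`. -/
theorem feedback_linearizable_ccm (n m : ℕ)
    (A : Matrix (Fin n) (Fin n) ℝ) (B : Matrix (Fin n) (Fin m) ℝ)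
    (Θ Θd : Matrix (Fin n) (Fin n) ℝ) (hΘ : IsUnit Θ.det)
    (β : Matrix (Fin m) (Fin m) ℝ) (hβ : IsUnit β.det)
    (Ux : Matrix (Fin m) (Fin n) ℝ)
    (X : Matrix (Fin n) (Fin n) ℝ) (hX : X.PosDef)
    (L : Matrix (Fin m) (Fin n) ℝ)
    (G : Matrix (Fin n) (Fin n) ℝ) (H : Matrix (Fin n) (Fin m) ℝ)
    (hG : G = Θd * Θ⁻¹ + Θ * (A + B * Ux) * Θ⁻¹)
    (hH : H = Θ * B * β)
    (hLyap : (-(X * G + Gᵀ * X + X * H * L + Lᵀ * Hᵀ * X)).PosDef) :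
    (-((Θdᵀ * X * Θ + Θᵀ * X * Θd) + Aᵀ * (Θᵀ * X * Θ) + (Θᵀ * X * Θ) * A
        + (Θᵀ * X * Θ) * B * (Ux + β * L * Θ)
        + (Ux + β * L * Θ)ᵀ * Bᵀ * (Θᵀ * X * Θ))).PosDef :=
  feedback_linearizable_ccm_general n m A B Θ Θd hΘ β Ux X L G H hG hH hLyap
end

section
/- (Reduced-order observer contraction) Let M₂₂(t) > αI (α > 0) and M₂₁(t) satisfy Ṁ₂₂ + M₂₁A₁₂ + A₁₂'M₂₁' + M₂₂A₂₂ + A₂₂'M₂₂ ≤ −2λM₂₂ pointwise. Then along solutions of δ̇_w = [M₂₂⁻¹M₂₁, I] A [0; I] δ_w = (M₂₂⁻¹M₂₁A₁₂ + A₂₂)δ_w, the function V = δ_w'M₂₂δ_w satisfies V̇ ≤ −2λV, hence δ_w(t)'M₂₂(t)δ_w(t) ≤ e^{−2λt} δ_w(0)'M₂₂(0)δ_w(0). -/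
open Matrix

lemma quad_hasDerivAt {n : ℕ} (M M' : ℝ → Matrix (Fin n) (Fin n) ℝ)
    (x : ℝ → Fin n → ℝ) (x' : Fin n → ℝ) (t : ℝ)
    (hM : ∀ i j, HasDerivAt (fun τ => M τ i j) (M' t i j) t)
    (hx : HasDerivAt x x' t) :
    HasDerivAt (fun τ => x τ ⬝ᵥ M τ *ᵥ x τ)
      (x' ⬝ᵥ M t *ᵥ x t + x t ⬝ᵥ M' t *ᵥ x t + x t ⬝ᵥ M t *ᵥ x') t := by
  have hxi : ∀ i, HasDerivAt (fun τ => x τ i) (x' i) t := hasDerivAt_pi.mp hx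
  have h : HasDerivAt (fun τ => ∑ i, ∑ j, x τ i * (M τ i j * x τ j))
      (∑ i, ∑ j, (x' i * (M t i j * x t j) + x t i * (M' t i j * x t j + M t i j * x' j))) t := by
    apply HasDerivAt.fun_sum
    intro i _
    apply HasDerivAt.fun_sum
    intro j _
    exact (hxi i).mul ((hM i j).mul (hxi j))
  convert h using 1
  · funext τ
    simp only [dotProduct, mulVec]
    exact Finset.sum_congr rfl fun i _ => by rw [Finset.mul_sum]
  · simp only [dotProduct, mulVec]
    rw [← Finset.sum_add_distrib, ← Finset.sum_add_distrib]
    refine Finset.sum_congr rfl fun i _ => ?_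
    rw [Finset.mul_sum, Finset.mul_sum, Finset.mul_sum, ← Finset.sum_add_distrib,
      ← Finset.sum_add_distrib]
    refine Finset.sum_congr rfl fun j _ => ?_
    ring

/-- reduced-order observer contraction: if `M₂₂(t) > αI` (`α > 0`) and
`Ṁ₂₂ + M₂₁A₁₂ + A₁₂'M₂₁' + M₂₂A₂₂ + A₂₂'M₂₂ ≤ −2λM₂₂` pointwise, then along solutions of
`δ̇_w = (M₂₂⁻¹M₂₁A₁₂ + A₂₂)δ_w`, `V = δ_w'M₂₂δ_w` satisfies `V̇ ≤ −2λV`, hence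
`δ_w(t)'M₂₂(t)δ_w(t) ≤ e^{−2λt} δ_w(0)'M₂₂(0)δ_w(0)`. -/
theorem reduced_order_observer_contraction (p q : ℕ) (α lam : ℝ) (hα : 0 < α) (hlam : 0 < lam)
    (A12 : ℝ → Matrix (Fin p) (Fin q) ℝ) (A22 : ℝ → Matrix (Fin q) (Fin q) ℝ)
    (M22 M22d : ℝ → Matrix (Fin q) (Fin q) ℝ) (M21 : ℝ → Matrix (Fin q) (Fin p) ℝ)
    (hM22 : ∀ t, (M22 t - α • (1 : Matrix (Fin q) (Fin q) ℝ)).PosDef)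
    (hM22d : ∀ t i j, HasDerivAt (fun τ => M22 τ i j) (M22d t i j) t)
    (hLMI : ∀ t, (-(M22d t + M21 t * A12 t + (A12 t)ᵀ * (M21 t)ᵀ + M22 t * A22 t
        + (A22 t)ᵀ * M22 t + (2 * lam) • M22 t)).PosSemidef)
    (δw : ℝ → (Fin q → ℝ))
    (hode : ∀ t, HasDerivAt δw (((M22 t)⁻¹ * M21 t * A12 t + A22 t) *ᵥ δw t) t) :
    ∀ t ≥ (0:ℝ),
      (∃ v' : ℝ, HasDerivAt (fun τ => δw τ ⬝ᵥ M22 τ *ᵥ δw τ) v' t ∧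
        v' ≤ -2 * lam * (δw t ⬝ᵥ M22 t *ᵥ δw t)) ∧
      δw t ⬝ᵥ M22 t *ᵥ δw t ≤ Real.exp (-2 * lam * t) * (δw 0 ⬝ᵥ M22 0 *ᵥ δw 0) := by
  -- M22 t is positive definite
  have hMpd : ∀ t, (M22 t).PosDef := by
    intro t
    have h1 := hM22 t
    rw [posDef_iff_dotProduct_mulVec]
    constructor
    · have h2 : M22 t = (M22 t - α • 1) + α • 1 := by abel
      rw [h2]
      exact h1.1.add (by simp [Matrix.IsHermitian])
    · intro x hx
      have h3 := h1.dotProduct_mulVec_pos hx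
      have h4 : star x ⬝ᵥ M22 t *ᵥ x
          = star x ⬝ᵥ (M22 t - α • 1) *ᵥ x + α * (star x ⬝ᵥ x) := by
        simp [sub_mulVec, dotProduct_sub, smul_mulVec, dotProduct_smul]
      rw [h4]
      have h5 : 0 < star x ⬝ᵥ x := by
        simpa using (dotProduct_star_self_pos_iff (v := x)).mpr hx
      positivity
  have hdet : ∀ t, IsUnit (M22 t).det := fun t => isUnit_iff_ne_zero.mpr (hMpd t).det_pos.ne'
  have hsymm : ∀ t, (M22 t)ᵀ = M22 t := fun t => (hMpd t).1
  set F : ℝ → Matrix (Fin q) (Fin q) ℝ := fun t => (M22 t)⁻¹ * M21 t * A12 t + A22 t with hF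
  set v' : ℝ → ℝ := fun t =>
    (F t *ᵥ δw t) ⬝ᵥ M22 t *ᵥ δw t + δw t ⬝ᵥ M22d t *ᵥ δw t + δw t ⬝ᵥ M22 t *ᵥ (F t *ᵥ δw t)
    with hv'
  have hVd : ∀ t, HasDerivAt (fun τ => δw τ ⬝ᵥ M22 τ *ᵥ δw τ) (v' t) t := fun t =>
    quad_hasDerivAt M22 M22d δw (F t *ᵥ δw t) t (hM22d t) (hode t)
  -- key bound
  have hbound : ∀ t, v' t ≤ -2 * lam * (δw t ⬝ᵥ M22 t *ᵥ δw t) := by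
    intro t
    set L : Matrix (Fin q) (Fin q) ℝ := M22d t + M21 t * A12 t + (A12 t)ᵀ * (M21 t)ᵀ
      + M22 t * A22 t + (A22 t)ᵀ * M22 t + (2 * lam) • M22 t with hL
    have hMF : M22 t * F t = M21 t * A12 t + M22 t * A22 t := by
      rw [hF]
      simp only [mul_add]
      rw [← Matrix.mul_assoc, ← Matrix.mul_assoc, Matrix.mul_nonsing_inv _ (hdet t),
        Matrix.one_mul]
    have hFM : (F t)ᵀ * M22 t = (A12 t)ᵀ * (M21 t)ᵀ + (A22 t)ᵀ * M22 t := by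
      rw [hF]
      simp only [Matrix.transpose_add, Matrix.transpose_mul, Matrix.add_mul,
        Matrix.transpose_nonsing_inv, hsymm t]
      rw [Matrix.mul_assoc ((A12 t)ᵀ), Matrix.mul_assoc ((M21 t)ᵀ),
        Matrix.nonsing_inv_mul _ (hdet t), Matrix.mul_one]
    have hquad : v' t + 2 * lam * (δw t ⬝ᵥ M22 t *ᵥ δw t) = δw t ⬝ᵥ L *ᵥ δw t := by
      have e1 : (F t *ᵥ δw t) ⬝ᵥ M22 t *ᵥ δw t = δw t ⬝ᵥ ((F t)ᵀ * M22 t) *ᵥ δw t := by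
        rw [← Matrix.mulVec_mulVec, dotProduct_mulVec (δw t) (F t)ᵀ,
          Matrix.vecMul_transpose]
      have e2 : δw t ⬝ᵥ M22 t *ᵥ (F t *ᵥ δw t) = δw t ⬝ᵥ (M22 t * F t) *ᵥ δw t := by
        rw [Matrix.mulVec_mulVec]
      simp only [hv']
      rw [e1, e2, hFM, hMF, hL]
      simp only [Matrix.add_mulVec, dotProduct_add, Matrix.smul_mulVec,
        dotProduct_smul, smul_eq_mul]
      ring
    have hneg : δw t ⬝ᵥ L *ᵥ δw t ≤ 0 := by
      have := (hLMI t).dotProduct_mulVec_nonneg (δw t)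
      simp only [Matrix.neg_mulVec, dotProduct_neg, star_trivial] at this
      linarith
    linarith [hquad, hneg]
  intro t ht
  refine ⟨⟨v' t, hVd t, hbound t⟩, ?_⟩
  -- Gronwall
  set g : ℝ → ℝ := fun τ => Real.exp (2 * lam * τ) * (δw τ ⬝ᵥ M22 τ *ᵥ δw τ) with hg
  have hgd : ∀ τ, HasDerivAt g
      (Real.exp (2 * lam * τ) * (2 * lam) * (δw τ ⬝ᵥ M22 τ *ᵥ δw τ)
        + Real.exp (2 * lam * τ) * v' τ) τ := by
    intro τ
    have he : HasDerivAt (fun s : ℝ => Real.exp (2 * lam * s))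
        (Real.exp (2 * lam * τ) * (2 * lam)) τ := by
      have h0 := ((hasDerivAt_id τ).const_mul (2 * lam)).exp
      simpa using h0
    exact he.mul (hVd τ)
  have hganti : Antitone g := by
    apply antitone_of_deriv_nonpos (fun τ => (hgd τ).differentiableAt)
    intro τ
    rw [(hgd τ).deriv]
    have h1 := hbound τ
    have h2 : (0:ℝ) < Real.exp (2 * lam * τ) := Real.exp_pos _
    nlinarith [mul_le_mul_of_nonneg_left h1 h2.le]
  have hgt : g t ≤ g 0 := hganti ht
  rw [hg] at hgt
  simp only [mul_zero, Real.exp_zero, one_mul] at hgt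
  have hee : Real.exp (-2 * lam * t) * Real.exp (2 * lam * t) = 1 := by
    rw [← Real.exp_add]; ring_nf; exact Real.exp_zero
  have h2 : (0:ℝ) < Real.exp (-2 * lam * t) := Real.exp_pos _
  have h3 := mul_le_mul_of_nonneg_left hgt h2.le
  rw [← mul_assoc, hee, one_mul] at h3
  exact h3
end

section
/- If the convexified condition (Φ+F)'Q⁻¹(Φ+F) + Q − (Φ−F) − (Φ−F)' − 2ρC'C ≤ −4λI holds with Q = Q' > 0, then Φ'Q⁻¹F + F'Q⁻¹Φ − ρC'C ≤ −2λI; in particular, for every δ with Cδ = 0, 2δ'Φ'Q⁻¹Fδ ≤ −2λ|δ|². -/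
/-! With `M = Φ − F`, the square `0 ≤ (Q − M)ᵀQ⁻¹(Q − M) = MᵀQ⁻¹M + Q − M − Mᵀ` added to the
convexified inequality cancels `Q − M − Mᵀ`, and polarization turns what is left of the quadratic
terms, `(Φ+F)ᵀQ⁻¹(Φ+F) − (Φ−F)ᵀQ⁻¹(Φ−F)`, into `2(ΦᵀQ⁻¹F + FᵀQ⁻¹Φ)`; halving gives the matrix
inequality. On `ker C` the `CᵀC` term vanishes, and since `Q⁻¹` is symmetric both cross terms have
the same quadratic form. -/

open Matrix

section

variable {ι κ : Type*} [Fintype ι] [Fintype κ]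

theorem add_transpose_mul_mul_add_sub {R : Type*} [CommRing R] (Φ F P : Matrix ι ι R) :
    (Φ + F)ᵀ * P * (Φ + F) - (Φ - F)ᵀ * P * (Φ - F) = (2 : R) • (Φᵀ * P * F + Fᵀ * P * Φ) := by
  simp only [transpose_add, transpose_sub, Matrix.add_mul, Matrix.sub_mul, Matrix.mul_add,
    Matrix.mul_sub]
  module

theorem dotProduct_transpose_mul_mul_mulVec_comm {P : Matrix ι ι ℝ} (hP : Pᵀ = P)
    (A B : Matrix ι ι ℝ) (x : ι → ℝ) :
    x ⬝ᵥ (Aᵀ * P * B) *ᵥ x = x ⬝ᵥ (Bᵀ * P * A) *ᵥ x := by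
  rw [dotProduct_mulVec, ← mulVec_transpose, dotProduct_comm]
  simp [Matrix.mul_assoc, hP]

theorem dotProduct_transpose_mul_mulVec_eq_zero {C : Matrix κ ι ℝ} {x : ι → ℝ}
    (hx : C *ᵥ x = 0) : x ⬝ᵥ (Cᵀ * C) *ᵥ x = 0 := by
  rw [← mulVec_mulVec, dotProduct_mulVec, vecMul_transpose, hx, zero_dotProduct]

variable [DecidableEq ι]

theorem Matrix.PosDef.posSemidef_transpose_mul_inv_mul_add_sub_sub {Q : Matrix ι ι ℝ}
    (hQ : Q.PosDef) (M : Matrix ι ι ℝ) : (Mᵀ * Q⁻¹ * M + Q - M - Mᵀ).PosSemidef := by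
  have hdet : IsUnit Q.det := Q.isUnit_iff_isUnit_det.mp hQ.isUnit
  have hsq : (Q - M)ᵀ * Q⁻¹ * (Q - M) = Mᵀ * Q⁻¹ * M + Q - M - Mᵀ := by
    rw [transpose_sub, (isHermitian_iff_isSymm.mp hQ.isHermitian).eq]
    simp only [Matrix.sub_mul, Matrix.mul_sub, Matrix.mul_assoc, Q.mul_nonsing_inv hdet,
      Q.nonsing_inv_mul hdet, Matrix.one_mul, Matrix.mul_one]
    abel
  have := hQ.inv.posSemidef.conjTranspose_mul_mul_same (Q - M)
  rwa [conjTranspose_eq_transpose_of_trivial, hsq] at this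

theorem posSemidef_neg_transpose_mul_inv_mul_add_of_convexified {Φ F Q : Matrix ι ι ℝ}
    {C : Matrix κ ι ℝ} {ρ lam : ℝ} (hQ : Q.PosDef)
    (h : (-((Φ + F)ᵀ * Q⁻¹ * (Φ + F) + Q - (Φ - F) - (Φ - F)ᵀ - (2 * ρ) • (Cᵀ * C)
          + (4 * lam) • (1 : Matrix ι ι ℝ))).PosSemidef) :
    (-(Φᵀ * Q⁻¹ * F + Fᵀ * Q⁻¹ * Φ - ρ • (Cᵀ * C)
        + (2 * lam) • (1 : Matrix ι ι ℝ))).PosSemidef := by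
  have hsum := h.add (hQ.posSemidef_transpose_mul_inv_mul_add_sub_sub (Φ - F))
  rw [eq_add_of_sub_eq (add_transpose_mul_mul_add_sub Φ F Q⁻¹)] at hsum
  convert hsum.smul (show (0 : ℝ) ≤ 2⁻¹ by norm_num) using 1
  module

end

theorem convexified_observer_condition_general (n p : ℕ) (ρ lam : ℝ)
    (Φ F Q : Matrix (Fin n) (Fin n) ℝ) (C : Matrix (Fin p) (Fin n) ℝ)
    (hQ : Q.PosDef)
    (h : (-((Φ + F)ᵀ * Q⁻¹ * (Φ + F) + Q - (Φ - F) - (Φ - F)ᵀ - (2 * ρ) • (Cᵀ * C)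
          + (4 * lam) • (1 : Matrix (Fin n) (Fin n) ℝ))).PosSemidef) :
    (-(Φᵀ * Q⁻¹ * F + Fᵀ * Q⁻¹ * Φ - ρ • (Cᵀ * C)
        + (2 * lam) • (1 : Matrix (Fin n) (Fin n) ℝ))).PosSemidef ∧
    ∀ δ : Fin n → ℝ, C *ᵥ δ = 0 →
      2 * (δ ⬝ᵥ (Φᵀ * Q⁻¹ * F) *ᵥ δ) ≤ -2 * lam * (δ ⬝ᵥ δ) := by
  have hS := posSemidef_neg_transpose_mul_inv_mul_add_of_convexified hQ h
  refine ⟨hS, fun δ hδ => ?_⟩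
  have hQinv : (Q⁻¹)ᵀ = Q⁻¹ := by
    rw [transpose_nonsing_inv, (isHermitian_iff_isSymm.mp hQ.isHermitian).eq]
  have hform := hS.dotProduct_mulVec_nonneg δ
  simp only [star_trivial, neg_mulVec, add_mulVec, sub_mulVec, smul_mulVec, one_mulVec,
    dotProduct_neg, dotProduct_add, dotProduct_sub, dotProduct_smul, smul_eq_mul,
    dotProduct_transpose_mul_mul_mulVec_comm hQinv F Φ, dotProduct_transpose_mul_mulVec_eq_zero hδ]
    at hform
  linarith

/-- if `(Φ+F)'Q⁻¹(Φ+F) + Q − (Φ−F) − (Φ−F)' − 2ρC'C ≤ −4λI` with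
`Q = Q' > 0`, then `Φ'Q⁻¹F + F'Q⁻¹Φ − ρC'C ≤ −2λI`; in particular, for every `δ` with
`Cδ = 0`, `2δ'Φ'Q⁻¹Fδ ≤ −2λ|δ|²`. -/
theorem convexified_observer_condition (n p : ℕ) (ρ lam : ℝ) (hlam : 0 < lam)
    (Φ F Q : Matrix (Fin n) (Fin n) ℝ) (C : Matrix (Fin p) (Fin n) ℝ)
    (hQ : Q.PosDef)
    (h : (-((Φ + F)ᵀ * Q⁻¹ * (Φ + F) + Q - (Φ - F) - (Φ - F)ᵀ - (2 * ρ) • (Cᵀ * C)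
          + (4 * lam) • (1 : Matrix (Fin n) (Fin n) ℝ))).PosSemidef) :
    (-(Φᵀ * Q⁻¹ * F + Fᵀ * Q⁻¹ * Φ - ρ • (Cᵀ * C)
        + (2 * lam) • (1 : Matrix (Fin n) (Fin n) ℝ))).PosSemidef ∧
    ∀ δ : Fin n → ℝ, C *ᵥ δ = 0 →
      2 * (δ ⬝ᵥ (Φᵀ * Q⁻¹ * F) *ᵥ δ) ≤ -2 * lam * (δ ⬝ᵥ δ) :=
  convexified_observer_condition_general n p ρ lam Φ F Q C hQ h
end
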